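/- The explicit functions x₁(t) = (t - √(t²+4))/2, x₂(t) = (t + √(t²+4))/2, x₃(t) = t, with y₁ = y₂ = -1 and y₃ = -2, solve the point-vortex equations for three vortices with circulations (1, 1, -1); moreover x₁(t) → 0 as t → +∞ and x₂(t) → 0 as t → -∞. -/

import Mathlib

/-!
For each `t`, `X1 t` and `X2 t` are the roots of `z ^ 2 - t z - 1`, so `X1 t * X2 t = -1` and
`X1 t + X2 t = X3 t`, while `X2 t - X1 t = √(t ^ 2 + 4)`. Hence every pairwise difference of the
`x`-coordinates is `± X1 t`, `± X2 t` or `X2 t - X1 t`, each term of the point-vortex field becomes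
a rational function of `X1 t` and `X2 t`, and the equations reduce to identities modulo
`X1 t * X2 t = -1`. The limits follow from `X1 = -1 / X2` together with `X1 t ≤ t ≤ X2 t`.
-/

/-- x-coordinate of vortex 1 in the borderline Θ = 0 scattering solution. -/
noncomputable def X1 (t : ℝ) : ℝ := (t - Real.sqrt (t ^ 2 + 4)) / 2

/-- x-coordinate of vortex 2 in the borderline Θ = 0 scattering solution. -/
noncomputable def X2 (t : ℝ) : ℝ := (t + Real.sqrt (t ^ 2 + 4)) / 2

/-- x-coordinate of vortex 3 in the borderline Θ = 0 scattering solution. -/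
def X3 (t : ℝ) : ℝ := t

open Filter

lemma sq_sqrt_sq_add_four (t : ℝ) : Real.sqrt (t ^ 2 + 4) ^ 2 = t ^ 2 + 4 :=
  Real.sq_sqrt (by positivity)

lemma abs_lt_sqrt_sq_add_four (t : ℝ) : |t| < Real.sqrt (t ^ 2 + 4) :=
  Real.lt_sqrt_of_sq_lt (by rw [sq_abs]; linarith)

lemma X1_mul_X2 (t : ℝ) : X1 t * X2 t = -1 := by
  unfold X1 X2
  linear_combination (-1 / 4 : ℝ) * sq_sqrt_sq_add_four t

lemma X1_add_X2 (t : ℝ) : X1 t + X2 t = X3 t := by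
  unfold X1 X2 X3
  ring

lemma X2_sub_X1 (t : ℝ) : X2 t - X1 t = Real.sqrt (t ^ 2 + 4) := by
  unfold X1 X2
  ring

lemma X1_lt_self (t : ℝ) : X1 t < t := by
  unfold X1
  linarith [neg_abs_le t, abs_lt_sqrt_sq_add_four t]

lemma self_lt_X2 (t : ℝ) : t < X2 t := by
  unfold X2
  linarith [le_abs_self t, abs_lt_sqrt_sq_add_four t]

lemma X1_neg (t : ℝ) : X1 t < 0 := by
  unfold X1
  linarith [le_abs_self t, abs_lt_sqrt_sq_add_four t]

lemma X2_pos (t : ℝ) : 0 < X2 t := by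
  unfold X2
  linarith [neg_abs_le t, abs_lt_sqrt_sq_add_four t]

lemma X1_lt_X2 (t : ℝ) : X1 t < X2 t :=
  (X1_neg t).trans (X2_pos t)

lemma hasDerivAt_sqrt_sq_add_four (t : ℝ) :
    HasDerivAt (fun u : ℝ => Real.sqrt (u ^ 2 + 4)) (t / Real.sqrt (t ^ 2 + 4)) t := by
  convert ((hasDerivAt_pow 2 t).add_const 4).sqrt (by positivity) using 1
  field_simp
  ring

lemma hasDerivAt_X1 (t : ℝ) : HasDerivAt X1 (-X1 t / (X2 t - X1 t)) t := by
  have hs : Real.sqrt (t ^ 2 + 4) ≠ 0 := Real.sqrt_ne_zero'.2 (by positivity)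
  refine (((hasDerivAt_id t).sub (hasDerivAt_sqrt_sq_add_four t)).div_const 2).congr_deriv ?_
  rw [X2_sub_X1, X1]
  field_simp
  ring

lemma hasDerivAt_X2 (t : ℝ) : HasDerivAt X2 (X2 t / (X2 t - X1 t)) t := by
  have hs : Real.sqrt (t ^ 2 + 4) ≠ 0 := Real.sqrt_ne_zero'.2 (by positivity)
  refine (((hasDerivAt_id t).add (hasDerivAt_sqrt_sq_add_four t)).div_const 2).congr_deriv ?_
  rw [X2_sub_X1, X2]
  field_simp
  ring

lemma tendsto_X2_atTop : Tendsto X2 atTop atTop :=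
  tendsto_atTop_mono (fun t => (self_lt_X2 t).le) tendsto_id

lemma tendsto_X1_atBot : Tendsto X1 atBot atBot :=
  tendsto_atBot_mono (fun t => (X1_lt_self t).le) tendsto_id

lemma X1_eq_neg_one_div_X2 (t : ℝ) : X1 t = -1 / X2 t := by
  rw [eq_div_iff (X2_pos t).ne', X1_mul_X2]

lemma X2_eq_neg_one_div_X1 (t : ℝ) : X2 t = -1 / X1 t := by
  rw [eq_div_iff (X1_neg t).ne, mul_comm, X1_mul_X2]

lemma tendsto_X1_atTop : Tendsto X1 atTop (nhds 0) := by
  simpa only [← funext X1_eq_neg_one_div_X2] using tendsto_X2_atTop.const_div_atTop (-1)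

lemma tendsto_X2_atBot : Tendsto X2 atBot (nhds 0) := by
  simpa only [← funext X2_eq_neg_one_div_X1] using tendsto_X1_atBot.const_div_atBot (-1)

/-- The explicit functions x₁ = (t - √(t²+4))/2, x₂ = (t + √(t²+4))/2, x₃ = t,
y₁ = y₂ = -1, y₃ = -2 solve the point-vortex equations with circulations
(1,1,-1), and x₁ → 0 as t → +∞, x₂ → 0 as t → -∞. -/
theorem borderline_scattering_solution :
    (∀ t : ℝ,
      HasDerivAt X1
        (-(1 * ((-1 : ℝ) - (-1)) / ((X1 t - X2 t) ^ 2 + ((-1 : ℝ) - (-1)) ^ 2)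
          + (-1) * ((-1 : ℝ) - (-2)) / ((X1 t - X3 t) ^ 2 + ((-1 : ℝ) - (-2)) ^ 2))) t ∧
      HasDerivAt (fun _ : ℝ => (-1 : ℝ))
        (1 * (X1 t - X2 t) / ((X1 t - X2 t) ^ 2 + ((-1 : ℝ) - (-1)) ^ 2)
          + (-1) * (X1 t - X3 t) / ((X1 t - X3 t) ^ 2 + ((-1 : ℝ) - (-2)) ^ 2)) t ∧
      HasDerivAt X2
        (-(1 * ((-1 : ℝ) - (-1)) / ((X2 t - X1 t) ^ 2 + ((-1 : ℝ) - (-1)) ^ 2)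
          + (-1) * ((-1 : ℝ) - (-2)) / ((X2 t - X3 t) ^ 2 + ((-1 : ℝ) - (-2)) ^ 2))) t ∧
      HasDerivAt (fun _ : ℝ => (-1 : ℝ))
        (1 * (X2 t - X1 t) / ((X2 t - X1 t) ^ 2 + ((-1 : ℝ) - (-1)) ^ 2)
          + (-1) * (X2 t - X3 t) / ((X2 t - X3 t) ^ 2 + ((-1 : ℝ) - (-2)) ^ 2)) t ∧
      HasDerivAt X3
        (-(1 * ((-2 : ℝ) - (-1)) / ((X3 t - X1 t) ^ 2 + ((-2 : ℝ) - (-1)) ^ 2)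
          + 1 * ((-2 : ℝ) - (-1)) / ((X3 t - X2 t) ^ 2 + ((-2 : ℝ) - (-1)) ^ 2))) t ∧
      HasDerivAt (fun _ : ℝ => (-2 : ℝ))
        (1 * (X3 t - X1 t) / ((X3 t - X1 t) ^ 2 + ((-2 : ℝ) - (-1)) ^ 2)
          + 1 * (X3 t - X2 t) / ((X3 t - X2 t) ^ 2 + ((-2 : ℝ) - (-1)) ^ 2)) t) ∧
    Filter.Tendsto X1 Filter.atTop (nhds 0) ∧
    Filter.Tendsto X2 Filter.atBot (nhds 0) := by
  refine ⟨fun t => ?_, tendsto_X1_atTop, tendsto_X2_atBot⟩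
  have hab := X1_mul_X2 t
  have h12 : X1 t - X2 t ≠ 0 := sub_ne_zero.2 (X1_lt_X2 t).ne
  have h21 : X2 t - X1 t ≠ 0 := sub_ne_zero.2 (X1_lt_X2 t).ne'
  rw [← X1_add_X2]
  refine ⟨(hasDerivAt_X1 t).congr_deriv ?_, (hasDerivAt_const t _).congr_deriv ?_,
    (hasDerivAt_X2 t).congr_deriv ?_, (hasDerivAt_const t _).congr_deriv ?_,
    (hasDerivAt_id t).congr_deriv ?_, (hasDerivAt_const t _).congr_deriv ?_⟩
  all_goals field_simp
  · linear_combination -(X1 t - X2 t) ^ 2 * X2 t * hab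
  · linear_combination -(X1 t - X2 t) * hab
  · linear_combination (X2 t - X1 t) ^ 2 * X1 t * hab
  · linear_combination -(X2 t - X1 t) * hab
  · linear_combination (X1 t * X2 t - 1) * hab
  · linear_combination -(X1 t + X2 t) * hab
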